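/- arXiv:2201.04500 — 3 statements merged into one kernel-verified Lean document; each statement's English description precedes it below -/
import Mathlib

section
/- Let μ > 0 and let u ∈ H¹(ℝ³) with ‖u‖_{L²}² = a. Then E_μ(u) ≥ (1/2)(1 − (a/‖Q‖_{L²}²)^{2/3} − 2 μ C* a) ‖∇u‖_{L²}². In particular, if (a/‖Q‖_{L²}²)^{2/3} + 2 μ C* a < 1 then E_μ(u) ≥ 0. -/
/-! Gagliardo–Nirenberg bounds the potential term by `(1/2)(a/‖Q‖²)^{2/3}‖∇u‖²`, and the
Hartree inequality bounds the nonlocal term by `(μ/4) C* a ‖∇u‖² ≤ μ C* a ‖∇u‖²`; subtracting both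
from the kinetic term `(1/2)‖∇u‖²` gives the lower bound, which is nonnegative as soon as its
coefficient is. -/

open MeasureTheory

noncomputable section

abbrev E3 : Type := EuclideanSpace ℝ (Fin 3)

/-- The nonlocal potential `A(f)(x) = ∫ f(y)/|x-y|² dy`. -/
def Afun (f : E3 → ℝ) (x : E3) : ℝ := ∫ y : E3, f y / ‖x - y‖ ^ 2

/-- Hartree-type double integral for real-valued functions. -/
def hartreeR (u : E3 → ℝ) : ℝ := ∫ x : E3, ∫ y : E3, (u x) ^ 2 * (u y) ^ 2 / ‖x - y‖ ^ 2

/-- Hartree-type double integral for complex-valued functions. -/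
def hartreeC (u : E3 → ℂ) : ℝ := ∫ x : E3, ∫ y : E3, ‖u x‖ ^ 2 * ‖u y‖ ^ 2 / ‖x - y‖ ^ 2

def gradSqC (u : E3 → ℂ) : ℝ := ∫ x : E3, ‖fderiv ℝ u x‖ ^ 2
def gradSqR (u : E3 → ℝ) : ℝ := ∫ x : E3, ‖fderiv ℝ u x‖ ^ 2

/-- Membership in `H¹(ℝ³, ℂ)`. -/
def H1C (u : E3 → ℂ) : Prop :=
  MemLp u 2 volume ∧ Differentiable ℝ u ∧ MemLp (fun x => fderiv ℝ u x) 2 volume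

/-- Membership in `H¹(ℝ³, ℝ)`. -/
def H1R (u : E3 → ℝ) : Prop :=
  MemLp u 2 volume ∧ Differentiable ℝ u ∧ MemLp (fun x => fderiv ℝ u x) 2 volume

/-- Membership in `H²(ℝ³, ℝ)`. -/
def H2R (u : E3 → ℝ) : Prop :=
  ContDiff ℝ 2 u ∧ MemLp u 2 volume ∧ MemLp (fun x => fderiv ℝ u x) 2 volume ∧
    MemLp (fun x => iteratedFDeriv ℝ 2 u x) 2 volume

def energyC (μ : ℝ) (u : E3 → ℂ) : ℝ :=
  (1 / 2) * gradSqC u - (3 / 10) * (∫ x : E3, ‖u x‖ ^ ((10 : ℝ) / 3)) - (μ / 4) * hartreeC u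

def energyR (μ : ℝ) (u : E3 → ℝ) : ℝ :=
  (1 / 2) * gradSqR u - (3 / 10) * (∫ x : E3, |u x| ^ ((10 : ℝ) / 3)) - (μ / 4) * hartreeR u

def eVec (i : Fin 3) : E3 := EuclideanSpace.single i (1 : ℝ)

/-- Partial derivative `∂ᵢ f`. -/
def pderiv3 (i : Fin 3) (f : E3 → ℝ) (x : E3) : ℝ := fderiv ℝ f x (eVec i)

/-- Laplacian, as the trace of the second derivative. -/
def lap (f : E3 → ℝ) (x : E3) : ℝ :=
  ∑ i : Fin 3, fderiv ℝ (fun y => fderiv ℝ f y (eVec i)) x (eVec i)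

/-- Scaling generator `Λf = (3/2) f + x · ∇f`. -/
def scalOp (f : E3 → ℝ) (x : E3) : ℝ := (3 / 2) * f x + fderiv ℝ f x x

def IsRadial (f : E3 → ℝ) : Prop := ∀ x y : E3, ‖x‖ = ‖y‖ → f x = f y

/-- Decay (with derivatives up to second order) like `e^{-|x|}/|x|`. -/
def decayLike (f : E3 → ℝ) : Prop :=
  ∃ C > 0, ∀ x : E3, 1 ≤ ‖x‖ →
    |f x| ≤ C * Real.exp (-‖x‖) / ‖x‖ ∧
    ‖fderiv ℝ f x‖ ≤ C * Real.exp (-‖x‖) / ‖x‖ ∧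
    ‖iteratedFDeriv ℝ 2 f x‖ ≤ C * Real.exp (-‖x‖) / ‖x‖

def L2normR (f : E3 → ℝ) : ℝ := Real.sqrt (∫ x : E3, (f x) ^ 2)

def H2normR (f : E3 → ℝ) : ℝ :=
  Real.sqrt ((∫ x : E3, (f x) ^ 2) + (∫ x : E3, ‖fderiv ℝ f x‖ ^ 2) +
    ∫ x : E3, ‖iteratedFDeriv ℝ 2 f x‖ ^ 2)

/-- The linearized operator `L₋`. -/
def Lm (μ : ℝ) (Qm : E3 → ℝ) (ξ : E3 → ℝ) (x : E3) : ℝ :=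
  - lap ξ x + ξ x - Qm x ^ ((4 : ℝ) / 3) * ξ x - μ * Afun (fun y => (Qm y) ^ 2) x * ξ x

/-- The linearized operator `L₊`. -/
def Lp (μ : ℝ) (Qm : E3 → ℝ) (ξ : E3 → ℝ) (x : E3) : ℝ :=
  - lap ξ x + ξ x - (7 / 3) * Qm x ^ ((4 : ℝ) / 3) * ξ x
    - 2 * μ * Afun (fun y => Qm y * ξ y) x * Qm x
    - μ * Afun (fun y => (Qm y) ^ 2) x * ξ x

/-- A ground state `Q_μ`: smooth, positive, radial, exponentially decaying solution of
`-ΔQ_μ + Q_μ = Q_μ^{7/3} + μ A(Q_μ²) Q_μ`. -/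
def groundState (μ : ℝ) (Qm : E3 → ℝ) : Prop :=
  ContDiff ℝ (⊤ : ℕ∞) Qm ∧ (∀ x, 0 < Qm x) ∧ IsRadial Qm ∧ decayLike Qm ∧
    ∀ x, - lap Qm x + Qm x = Qm x ^ ((7 : ℝ) / 3) + μ * Afun (fun y => (Qm y) ^ 2) x * Qm x

/-- The mass-critical ground state `Q`: smooth, positive, radial, radially nonincreasing,
exponentially decaying solution of `-ΔQ + Q = Q^{7/3}`. -/
def isQ (Q : E3 → ℝ) : Prop :=
  ContDiff ℝ (⊤ : ℕ∞) Q ∧ (∀ x, 0 < Q x) ∧ IsRadial Q ∧ decayLike Q ∧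
    (∀ x y : E3, ‖x‖ ≤ ‖y‖ → Q y ≤ Q x) ∧
    (∀ x, - lap Q x + Q x = Q x ^ ((7 : ℝ) / 3))

lemma gradSqC_nonneg (u : E3 → ℂ) : 0 ≤ gradSqC u :=
  integral_nonneg fun _ => by positivity

lemma hartreeC_nonneg (u : E3 → ℂ) : 0 ≤ hartreeC u :=
  integral_nonneg fun _ => integral_nonneg fun _ => by positivity

lemma potential_term_le_of_gagliardoNirenberg {a b G I : ℝ} (ha : 0 ≤ a) (hb : 0 ≤ b)
    (hI : I ≤ 5 / 3 * b ^ (-(2 : ℝ) / 3) * a ^ ((2 : ℝ) / 3) * G) :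
    3 / 10 * I ≤ 1 / 2 * (a / b) ^ ((2 : ℝ) / 3) * G := by
  have hdiv : (a / b) ^ ((2 : ℝ) / 3) = a ^ ((2 : ℝ) / 3) * b ^ (-(2 : ℝ) / 3) := by
    rw [Real.div_rpow ha hb, neg_div, Real.rpow_neg hb, div_eq_mul_inv]
  rw [hdiv]
  linarith

lemma hartree_term_le {μ C a G H : ℝ} (hμ : 0 ≤ μ) (hH : 0 ≤ H) (hHC : H ≤ C * G * a) :
    μ / 4 * H ≤ μ * C * a * G := by
  have hCGa : 0 ≤ C * G * a := hH.trans hHC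
  calc μ / 4 * H ≤ μ / 4 * (C * G * a) := mul_le_mul_of_nonneg_left hHC (by positivity)
    _ ≤ μ * C * a * G := by linarith [mul_nonneg hμ hCGa]

theorem energy_lower_bound_general (μ a Cstar : ℝ) (Q : E3 → ℝ) (u : E3 → ℂ)
    (hμ : 0 < μ)
    (hGN : ∀ v : E3 → ℂ, H1C v →
      (∫ x : E3, ‖v x‖ ^ ((10 : ℝ) / 3)) ≤
        (5 / 3) * (∫ x : E3, (Q x) ^ 2) ^ (-(2 : ℝ) / 3) *
          (∫ x : E3, ‖v x‖ ^ 2) ^ ((2 : ℝ) / 3) * gradSqC v)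
    (hCstar : ∀ v : E3 → ℂ, H1C v →
      hartreeC v ≤ Cstar * gradSqC v * (∫ x : E3, ‖v x‖ ^ 2))
    (hu : H1C u) (ha : (∫ x : E3, ‖u x‖ ^ 2) = a) :
    (1 / 2) * (1 - (a / (∫ x : E3, (Q x) ^ 2)) ^ ((2 : ℝ) / 3) - 2 * μ * Cstar * a) * gradSqC u
        ≤ energyC μ u ∧
      ((a / (∫ x : E3, (Q x) ^ 2)) ^ ((2 : ℝ) / 3) + 2 * μ * Cstar * a < 1 →
        0 ≤ energyC μ u) := by
  have ha0 : 0 ≤ a := ha ▸ integral_nonneg fun _ => by positivity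
  have hQ0 : 0 ≤ ∫ x : E3, (Q x) ^ 2 := integral_nonneg fun _ => sq_nonneg _
  have hpot := potential_term_le_of_gagliardoNirenberg ha0 hQ0 (ha ▸ hGN u hu)
  have hhar := hartree_term_le hμ.le (hartreeC_nonneg u) (ha ▸ hCstar u hu)
  have hbound : (1 / 2) * (1 - (a / (∫ x : E3, (Q x) ^ 2)) ^ ((2 : ℝ) / 3) - 2 * μ * Cstar * a)
      * gradSqC u ≤ energyC μ u := by
    unfold energyC
    linarith
  refine ⟨hbound, fun hsmall => hbound.trans' ?_⟩
  have hcoeff : 0 ≤ 1 - (a / (∫ x : E3, (Q x) ^ 2)) ^ ((2 : ℝ) / 3) - 2 * μ * Cstar * a := by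
    linarith
  exact mul_nonneg (mul_nonneg (by norm_num) hcoeff) (gradSqC_nonneg u)

/-- Energy lower bound: for `μ > 0` and `u ∈ H¹(ℝ³)` with `‖u‖_{L²}² = a`,
`E_μ(u) ≥ (1/2)(1 - (a/‖Q‖_{L²}²)^{2/3} - 2μC*a)‖∇u‖_{L²}²`; in particular if
`(a/‖Q‖_{L²}²)^{2/3} + 2μC*a < 1` then `E_μ(u) ≥ 0`. -/
theorem energy_lower_bound (μ a Cstar : ℝ) (Q : E3 → ℝ) (u : E3 → ℂ)
    (hμ : 0 < μ) (hQ : isQ Q)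
    (hGN : ∀ v : E3 → ℂ, H1C v →
      (∫ x : E3, ‖v x‖ ^ ((10 : ℝ) / 3)) ≤
        (5 / 3) * (∫ x : E3, (Q x) ^ 2) ^ (-(2 : ℝ) / 3) *
          (∫ x : E3, ‖v x‖ ^ 2) ^ ((2 : ℝ) / 3) * gradSqC v)
    (hCstar : ∀ v : E3 → ℂ, H1C v →
      hartreeC v ≤ Cstar * gradSqC v * (∫ x : E3, ‖v x‖ ^ 2))
    (hu : H1C u) (ha : (∫ x : E3, ‖u x‖ ^ 2) = a) :
    (1 / 2) * (1 - (a / (∫ x : E3, (Q x) ^ 2)) ^ ((2 : ℝ) / 3) - 2 * μ * Cstar * a) * gradSqC u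
        ≤ energyC μ u ∧
      ((a / (∫ x : E3, (Q x) ^ 2)) ^ ((2 : ℝ) / 3) + 2 * μ * Cstar * a < 1 →
        0 ≤ energyC μ u) :=
  energy_lower_bound_general μ a Cstar Q u hμ hGN hCstar hu ha

end
end

section
/- The kernel of L_{−,μ} is spanned by Q_μ: if ξ ∈ H²(ℝ³) is real-valued and satisfies −Δξ + ξ − Q_μ^{4/3}ξ − μ A(Q_μ²) ξ = 0 almost everywhere on ℝ³, then ξ = c Q_μ for some constant c ∈ ℝ. -/
open MeasureTheory

noncomputable section

/-!
Subtracting `ξ` times the equation of `Q_μ` from `Q_μ` times `L₋ξ = 0` cancels both potentials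
and leaves `Q Δξ = ξ ΔQ`, i.e. `div (Q² ∇w) = 0` for `w = ξ / Q`. Testing this against `χ_R² w`,
with `χ_R` a cutoff at scale `R`, and absorbing the cross term gives the Caccioppoli bound
`∫ χ_R² Q² |∇w|² ≤ C R⁻² ∫ ξ²`. Letting `R → ∞` forces `∇w = 0`, so `ξ / Q` is constant.
-/

open Metric Filter

lemma integral_fderiv_apply_eq_zero {E : Type*} [NormedAddCommGroup E] [NormedSpace ℝ E]
    [FiniteDimensional ℝ E] [MeasurableSpace E] [BorelSpace E] (μ : Measure E)
    [μ.IsAddHaarMeasure] {h : E → ℝ} (hh : ContDiff ℝ 1 h) (hc : HasCompactSupport h) (v : E) :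
    ∫ x, fderiv ℝ h x v ∂μ = 0 := by
  have hdh : Integrable (fun x => fderiv ℝ h x v) μ :=
    ((hh.continuous_fderiv one_ne_zero).clm_apply continuous_const).integrable_of_hasCompactSupport
      (hc.fderiv_apply ℝ v)
  simpa using integral_mul_fderiv_eq_neg_fderiv_mul_of_integrable (μ := μ) (f := fun _ => (1 : ℝ))
    (g := h) (v := v) (by simp) (by simpa using hdh)
    (by simpa using hh.continuous.integrable_of_hasCompactSupport hc)
    (fun _ _ => differentiableAt_const _) (fun x _ => (hh.differentiable one_ne_zero) x)

section Cutoff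

variable {E : Type*} [NormedAddCommGroup E] [NormedSpace ℝ E] [HasContDiffBump E]

def unitBump : ContDiffBump (0 : E) := ⟨1, 2, one_pos, one_lt_two⟩

def cutoff (R : ℝ) (x : E) : ℝ := unitBump (E := E) (R⁻¹ • x)

lemma contDiff_cutoff {n : ℕ∞} (R : ℝ) : ContDiff ℝ n (cutoff (E := E) R) :=
  (unitBump (E := E)).contDiff.comp (contDiff_const_smul _)

lemma cutoff_eq_one {R : ℝ} (hR : 0 < R) {x : E} (hx : ‖x‖ ≤ R) : cutoff R x = 1 :=
  (unitBump (E := E)).one_of_mem_closedBall <| by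
    simpa [unitBump, norm_smul, abs_of_pos hR, inv_mul_le_one₀ hR] using hx

lemma cutoff_eq_zero {R : ℝ} (hR : 0 < R) {x : E} (hx : 2 * R ≤ ‖x‖) : cutoff R x = 0 :=
  (unitBump (E := E)).zero_of_le_dist <| by
    simpa [unitBump, norm_smul, abs_of_pos hR, le_inv_mul_iff₀ hR, mul_comm] using hx

variable [FiniteDimensional ℝ E]

lemma hasCompactSupport_cutoff_sq {R : ℝ} (hR : 0 < R) :
    HasCompactSupport fun x : E => cutoff R x ^ 2 :=
  .intro (isCompact_closedBall 0 (2 * R)) fun x hx => by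
    rw [cutoff_eq_zero hR (le_of_lt (by simpa using hx)), zero_pow two_ne_zero]

lemma exists_norm_fderiv_cutoff_le :
    ∃ M, ∀ R > 0, ∀ x : E, ‖fderiv ℝ (cutoff R) x‖ ≤ M / R := by
  obtain ⟨M, hM⟩ := ((unitBump (E := E)).contDiff (n := 1).continuous_fderiv
    one_ne_zero).bounded_above_of_compact_support ((unitBump (E := E)).hasCompactSupport.fderiv ℝ)
  refine ⟨M, fun R hR x => ?_⟩
  rw [show cutoff R = fun y : E => unitBump (E := E) (R⁻¹ • y) from rfl,
    fderiv_comp_smul (𝕜 := ℝ), norm_smul, Real.norm_of_nonneg (inv_nonneg.mpr hR.le),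
    inv_mul_eq_div]
  exact div_le_div_of_nonneg_right (hM _) hR.le

variable [MeasurableSpace E] [BorelSpace E] {μ : Measure E} [IsFiniteMeasureOnCompacts μ]

lemma integrable_cutoff_sq_mul {f : E → ℝ} (hf : Continuous f) {R : ℝ} (hR : 0 < R) :
    Integrable (fun x => cutoff R x ^ 2 * f x) μ :=
  (((contDiff_cutoff (n := 0) R).continuous.pow 2).mul hf).integrable_of_hasCompactSupport
    (hasCompactSupport_cutoff_sq hR).mul_right

lemma eq_zero_of_integral_cutoff_sq_mul_le [μ.IsOpenPosMeasure] {f : E → ℝ} (hf : Continuous f)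
    (hf0 : ∀ x, 0 ≤ f x) {K : ℝ} (hK : ∀ R > 0, ∫ x, cutoff R x ^ 2 * f x ∂μ ≤ K / R ^ 2)
    (x : E) : f x = 0 := by
  set r := ‖x‖ + 1
  have hr : 0 < r := by positivity
  have hle : ∀ R ≥ r, ∫ y in ball 0 r, f y ∂μ ≤ K / R ^ 2 := fun R hR => calc
    ∫ y in ball 0 r, f y ∂μ = ∫ y in ball 0 r, cutoff R y ^ 2 * f y ∂μ :=
      setIntegral_congr_fun measurableSet_ball fun y hy => by
        rw [cutoff_eq_one (hr.trans_le hR) (by simpa using (mem_ball_zero_iff.mp hy).le.trans hR),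
          one_pow, one_mul]
    _ ≤ ∫ y, cutoff R y ^ 2 * f y ∂μ :=
      setIntegral_le_integral (integrable_cutoff_sq_mul hf (hr.trans_le hR))
        (.of_forall fun y => mul_nonneg (sq_nonneg _) (hf0 y))
    _ ≤ K / R ^ 2 := hK R (hr.trans_le hR)
  have hzero : ∫ y in ball 0 r, f y ∂μ = 0 :=
    le_antisymm
      (ge_of_tendsto (tendsto_const_nhds.div_atTop (tendsto_pow_atTop two_ne_zero))
        (eventually_ge_atTop r |>.mono hle))
      (setIntegral_nonneg measurableSet_ball fun y _ => hf0 y)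
  have hae : f =ᵐ[μ.restrict (ball 0 r)] 0 :=
    (setIntegral_eq_zero_iff_of_nonneg_ae (.of_forall hf0)
      ((hf.continuousOn.integrableOn_compact (isCompact_closedBall 0 r)).mono_set
        ball_subset_closedBall)).mp hzero
  exact Measure.eqOn_open_of_ae_eq hae isOpen_ball hf.continuousOn continuousOn_const
    (mem_ball_zero_iff.mpr (lt_add_one _))

end Cutoff

section PartialDerivatives

variable {f g : E3 → ℝ} {x : E3}

lemma lap_eq_sum_pderiv3 (f : E3 → ℝ) (x : E3) : lap f x = ∑ i, pderiv3 i (pderiv3 i f) x := rfl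

lemma pderiv3_mul (hf : DifferentiableAt ℝ f x) (hg : DifferentiableAt ℝ g x) (i : Fin 3) :
    pderiv3 i (fun y => f y * g y) x = pderiv3 i f x * g x + f x * pderiv3 i g x := by
  simp only [pderiv3, fderiv_fun_mul hf hg, add_apply, smul_apply, smul_eq_mul]
  ring

lemma pderiv3_sub (hf : DifferentiableAt ℝ f x) (hg : DifferentiableAt ℝ g x) (i : Fin 3) :
    pderiv3 i (fun y => f y - g y) x = pderiv3 i f x - pderiv3 i g x := by
  simp only [pderiv3, fderiv_fun_sub hf hg, sub_apply]

lemma contDiff_pderiv3 {n : ℕ} (hf : ContDiff ℝ (n + 1) f) (i : Fin 3) :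
    ContDiff ℝ n (pderiv3 i f) :=
  (hf.fderiv_right le_rfl).clm_apply contDiff_const

lemma abs_pderiv3_le (f : E3 → ℝ) (i : Fin 3) (x : E3) : |pderiv3 i f x| ≤ ‖fderiv ℝ f x‖ := by
  simpa [pderiv3, eVec] using (fderiv ℝ f x).le_opNorm (eVec i)

lemma fderiv_eq_zero_of_pderiv3_eq_zero (h : ∀ i, pderiv3 i f x = 0) : fderiv ℝ f x = 0 :=
  ContinuousLinearMap.coe_injective <| (EuclideanSpace.basisFun (Fin 3) ℝ).toBasis.ext fun i => by
    simpa [pderiv3, eVec] using h i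

lemma continuous_lap (hf : ContDiff ℝ 2 f) : Continuous (lap f) := by
  simp only [funext (lap_eq_sum_pderiv3 f)]
  exact continuous_finsetSum _ fun i _ =>
    ((contDiff_pderiv3 (n := 0) (contDiff_pderiv3 (n := 1) hf i) i).continuous)

lemma integrable_pderiv3 {F : E3 → ℝ} (hF : ContDiff ℝ 1 F) (hFc : HasCompactSupport F)
    (i : Fin 3) : Integrable (pderiv3 i F) :=
  (contDiff_pderiv3 (n := 0) hF i).continuous.integrable_of_hasCompactSupport
    (hFc.fderiv_apply ℝ (eVec i))

lemma integral_sum_pderiv3_eq_zero {F : Fin 3 → E3 → ℝ} (hF : ∀ i, ContDiff ℝ 1 (F i))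
    (hFc : ∀ i, HasCompactSupport (F i)) : ∫ x, ∑ i, pderiv3 i (F i) x = 0 := by
  rw [integral_finsetSum _ fun i _ => integrable_pderiv3 (hF i) (hFc i) i]
  exact Finset.sum_eq_zero fun i _ => integral_fderiv_apply_eq_zero volume (hF i) (hFc i) (eVec i)

end PartialDerivatives

section WeightedLiouville

variable {a w : E3 → ℝ}

lemma caccioppoli_pointwise {c : E3 → ℝ} (hc : ContDiff ℝ 1 c) (ha : ContDiff ℝ 1 a)
    (ha0 : ∀ x, 0 ≤ a x) (hw : ContDiff ℝ 2 w)
    (hdiv : ∀ x, ∑ i, pderiv3 i (fun y => a y * pderiv3 i w y) x = 0) (x : E3) :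
    c x ^ 2 * (a x * ∑ i, pderiv3 i w x ^ 2) / 2 - 2 * (a x * w x ^ 2 * ∑ i, pderiv3 i c x ^ 2)
      ≤ ∑ i, pderiv3 i (fun y => c y ^ 2 * w y * (a y * pderiv3 i w y)) x := by
  have hcx : DifferentiableAt ℝ c x := hc.differentiable one_ne_zero x
  have hwx : DifferentiableAt ℝ w x := hw.differentiable two_ne_zero x
  have hflux : ∀ i, pderiv3 i (fun y => c y ^ 2 * w y * (a y * pderiv3 i w y)) x
      = (2 * c x * pderiv3 i c x * w x + c x ^ 2 * pderiv3 i w x) * (a x * pderiv3 i w x)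
        + c x ^ 2 * w x * pderiv3 i (fun y => a y * pderiv3 i w y) x := by
    intro i
    have hsq : pderiv3 i (fun y => c y ^ 2) x = 2 * c x * pderiv3 i c x := by
      simp only [sq]
      rw [pderiv3_mul hcx hcx]
      ring
    rw [pderiv3_mul (f := fun y => c y ^ 2 * w y) (g := fun y => a y * pderiv3 i w y)
        ((hcx.pow 2).mul hwx)
        ((ha.differentiable one_ne_zero x).mul
          ((contDiff_pderiv3 (n := 1) hw i).differentiable one_ne_zero x)),
      pderiv3_mul (f := fun y => c y ^ 2) (hcx.fun_pow 2) hwx, hsq]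
  calc _ = ∑ i, (c x ^ 2 * (a x * pderiv3 i w x ^ 2) / 2
          - 2 * (a x * w x ^ 2 * pderiv3 i c x ^ 2)) := by
        simp only [Finset.mul_sum, Finset.sum_div, Finset.sum_sub_distrib]
    _ ≤ ∑ i, (2 * c x * pderiv3 i c x * w x + c x ^ 2 * pderiv3 i w x) * (a x * pderiv3 i w x) :=
        Finset.sum_le_sum fun i _ => by
          nlinarith [mul_nonneg (ha0 x) (sq_nonneg (c x * pderiv3 i w x + 2 * w x * pderiv3 i c x))]
    _ = _ := by
        rw [Finset.sum_congr rfl fun i _ => hflux i, Finset.sum_add_distrib, ← Finset.mul_sum,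
          hdiv x, mul_zero, add_zero]

lemma exists_integral_cutoff_sq_mul_le (ha : ContDiff ℝ 1 a) (ha0 : ∀ x, 0 ≤ a x)
    (hw : ContDiff ℝ 2 w) (hdiv : ∀ x, ∑ i, pderiv3 i (fun y => a y * pderiv3 i w y) x = 0)
    (hint : Integrable fun x => a x * w x ^ 2) :
    ∃ K, ∀ R > 0, ∫ x, cutoff R x ^ 2 * (a x * ∑ i, pderiv3 i w x ^ 2) ≤ K / R ^ 2 := by
  obtain ⟨M, hM⟩ := exists_norm_fderiv_cutoff_le (E := E3)
  refine ⟨12 * M ^ 2 * ∫ x, a x * w x ^ 2, fun R hR => ?_⟩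
  set c : E3 → ℝ := cutoff R
  have hc : ContDiff ℝ 2 c := contDiff_cutoff R
  have hc1 : ContDiff ℝ 1 c := hc.of_le one_le_two
  have hcsq : HasCompactSupport fun x => c x ^ 2 := hasCompactSupport_cutoff_sq hR
  set F : Fin 3 → E3 → ℝ := fun i y => c y ^ 2 * w y * (a y * pderiv3 i w y)
  have hF : ∀ i, ContDiff ℝ 1 (F i) := fun i =>
    ((hc1.pow 2).mul (hw.of_le one_le_two)).mul (ha.mul (contDiff_pderiv3 hw i))
  have hFc : ∀ i, HasCompactSupport (F i) := fun i => hcsq.mul_right.mul_right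
  have hdc : ∀ x, ∑ i, pderiv3 i c x ^ 2 ≤ 3 * (M / R) ^ 2 := fun x => by
    calc ∑ i, pderiv3 i c x ^ 2 ≤ ∑ _i : Fin 3, (M / R) ^ 2 := Finset.sum_le_sum fun i _ => by
          rw [← sq_abs]
          exact pow_le_pow_left₀ (abs_nonneg _) ((abs_pderiv3_le c i x).trans (hM R hR x)) 2
      _ = 3 * (M / R) ^ 2 := by simp
  set T : E3 → ℝ := fun x => a x * w x ^ 2 * ∑ i, pderiv3 i c x ^ 2
  have hT0 : ∀ x, 0 ≤ T x := fun x =>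
    mul_nonneg (mul_nonneg (ha0 x) (sq_nonneg _)) (Finset.sum_nonneg fun i _ => sq_nonneg _)
  have hT_le : ∀ x, T x ≤ 3 * (M / R) ^ 2 * (a x * w x ^ 2) := fun x => by
    simpa only [mul_comm (3 * (M / R) ^ 2)] using
      mul_le_mul_of_nonneg_left (hdc x) (mul_nonneg (ha0 x) (sq_nonneg (w x)))
  have hTcont : Continuous T :=
    (ha.continuous.mul (hw.continuous.pow 2)).mul <| continuous_finsetSum _ fun i _ =>
      (contDiff_pderiv3 (n := 0) hc1 i).continuous.pow 2
  have hTint : Integrable T :=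
    (hint.const_mul _).mono' hTcont.aestronglyMeasurable
      (.of_forall fun x => (Real.norm_of_nonneg (hT0 x)).trans_le (hT_le x))
  have hPint : Integrable fun x => c x ^ 2 * (a x * ∑ i, pderiv3 i w x ^ 2) :=
    integrable_cutoff_sq_mul (ha.continuous.mul (continuous_finsetSum _ fun i _ =>
      (contDiff_pderiv3 (n := 1) hw i).continuous.pow 2)) hR
  have hbalance : (∫ x, c x ^ 2 * (a x * ∑ i, pderiv3 i w x ^ 2)) / 2 - 2 * ∫ x, T x ≤ 0 := by
    rw [← integral_sum_pderiv3_eq_zero hF hFc, ← integral_div, ← integral_const_mul,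
      ← integral_sub (hPint.div_const 2) (hTint.const_mul 2)]
    exact integral_mono ((hPint.div_const 2).sub (hTint.const_mul 2))
      (integrable_finsetSum _ fun i _ => integrable_pderiv3 (hF i) (hFc i) i)
      (caccioppoli_pointwise hc1 ha ha0 hw hdiv)
  calc _ ≤ 4 * ∫ x, T x := by linarith
    _ ≤ 4 * ∫ x, 3 * (M / R) ^ 2 * (a x * w x ^ 2) :=
        mul_le_mul_of_nonneg_left (integral_mono hTint (hint.const_mul _) hT_le)
          zero_le_four
    _ = _ := by
        rw [integral_const_mul]
        field_simp
        ring

theorem pderiv3_eq_zero_of_sum_pderiv3_mul_pderiv3_eq_zero (ha : ContDiff ℝ 1 a)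
    (ha_pos : ∀ x, 0 < a x) (hw : ContDiff ℝ 2 w)
    (hdiv : ∀ x, ∑ i, pderiv3 i (fun y => a y * pderiv3 i w y) x = 0)
    (hint : Integrable fun x => a x * w x ^ 2) (i : Fin 3) (x : E3) : pderiv3 i w x = 0 := by
  have ha0 : ∀ x, 0 ≤ a x := fun x => (ha_pos x).le
  obtain ⟨K, hK⟩ := exists_integral_cutoff_sq_mul_le ha ha0 hw hdiv hint
  have hcont : Continuous fun x => a x * ∑ i, pderiv3 i w x ^ 2 :=
    ha.continuous.mul (continuous_finsetSum _ fun i _ =>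
      (contDiff_pderiv3 (n := 1) hw i).continuous.pow 2)
  have hzero := eq_zero_of_integral_cutoff_sq_mul_le (μ := volume) hcont
    (fun x => mul_nonneg (ha0 x) (Finset.sum_nonneg fun i _ => sq_nonneg _)) hK x
  have hsum : ∑ i, pderiv3 i w x ^ 2 = 0 := (mul_eq_zero.mp hzero).resolve_left (ha_pos x).ne'
  exact pow_eq_zero_iff two_ne_zero |>.mp <|
    (Finset.sum_eq_zero_iff_of_nonneg fun i _ => sq_nonneg _).mp hsum i (Finset.mem_univ i)

end WeightedLiouville

section Kernel

variable {Q ξ : E3 → ℝ}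

lemma sum_pderiv3_sq_mul_pderiv3_div_eq (hQ : ContDiff ℝ 2 Q) (hQpos : ∀ x, 0 < Q x)
    (hξ : ContDiff ℝ 2 ξ) (x : E3) :
    ∑ i, pderiv3 i (fun y => Q y ^ 2 * pderiv3 i (fun z => ξ z / Q z) y) x
      = Q x * lap ξ x - ξ x * lap Q x := by
  have hQd : Differentiable ℝ Q := hQ.differentiable two_ne_zero
  have hξd : Differentiable ℝ ξ := hξ.differentiable two_ne_zero
  have hwd : Differentiable ℝ fun z => ξ z / Q z :=
    (hξ.div hQ fun z => (hQpos z).ne').differentiable two_ne_zero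
  have hflux : ∀ i, (fun y => Q y ^ 2 * pderiv3 i (fun z => ξ z / Q z) y)
      = fun y => Q y * pderiv3 i ξ y - ξ y * pderiv3 i Q y := fun i => funext fun y => by
    have hξ_eq : ξ = fun z => ξ z / Q z * Q z :=
      funext fun z => (div_mul_cancel₀ _ (hQpos z).ne').symm
    conv_rhs => rw [hξ_eq, pderiv3_mul (hwd y) (hQd y)]
    field_simp [(hQpos y).ne']
    ring
  rw [lap_eq_sum_pderiv3, lap_eq_sum_pderiv3, Finset.mul_sum, Finset.mul_sum,
    ← Finset.sum_sub_distrib]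
  refine Finset.sum_congr rfl fun i _ => ?_
  have hdξ := (contDiff_pderiv3 (n := 1) hξ i).differentiable one_ne_zero x
  have hdQ := (contDiff_pderiv3 (n := 1) hQ i).differentiable one_ne_zero x
  rw [hflux i, pderiv3_sub (f := fun y => Q y * pderiv3 i ξ y)
      (g := fun y => ξ y * pderiv3 i Q y) ((hQd x).mul hdξ) ((hξd x).mul hdQ),
    pderiv3_mul (hQd x) hdξ, pderiv3_mul (hξd x) hdQ]
  ring

theorem exists_eq_const_mul_of_mul_lap_eq (hQ : ContDiff ℝ 2 Q) (hQpos : ∀ x, 0 < Q x)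
    (hξ : ContDiff ℝ 2 ξ) (hξL2 : MemLp ξ 2) (h : ∀ x, Q x * lap ξ x = ξ x * lap Q x) :
    ∃ c : ℝ, ∀ x, ξ x = c * Q x := by
  set w : E3 → ℝ := fun z => ξ z / Q z
  have hw : ContDiff ℝ 2 w := hξ.div hQ fun z => (hQpos z).ne'
  have hdiv : ∀ x, ∑ i, pderiv3 i (fun y => Q y ^ 2 * pderiv3 i w y) x = 0 := fun x => by
    rw [sum_pderiv3_sq_mul_pderiv3_div_eq hQ hQpos hξ, h, sub_self]
  have hint : Integrable fun x => Q x ^ 2 * w x ^ 2 :=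
    hξL2.integrable_sq.congr <| .of_forall fun x => by
      show ξ x ^ 2 = Q x ^ 2 * (ξ x / Q x) ^ 2
      rw [div_pow, mul_div_cancel₀ _ (pow_ne_zero 2 (hQpos x).ne')]
  have hgrad : ∀ x, fderiv ℝ w x = 0 := fun x =>
    fderiv_eq_zero_of_pderiv3_eq_zero fun i =>
      pderiv3_eq_zero_of_sum_pderiv3_mul_pderiv3_eq_zero (hQ.pow 2 |>.of_le one_le_two)
        (fun x => pow_pos (hQpos x) 2) hw hdiv hint i x
  refine ⟨w 0, fun x => ?_⟩
  rw [← is_const_of_fderiv_eq_zero (hw.differentiable two_ne_zero) hgrad x 0]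
  exact (div_mul_cancel₀ _ (hQpos x).ne').symm

lemma mul_lap_eq_of_Lm_eq_zero {μ : ℝ} {x : E3} (hQpos : 0 < Q x)
    (hQeq : -lap Q x + Q x = Q x ^ ((7 : ℝ) / 3) + μ * Afun (fun y => Q y ^ 2) x * Q x)
    (hL : Lm μ Q ξ x = 0) : Q x * lap ξ x = ξ x * lap Q x := by
  have h73 : Q x ^ ((7 : ℝ) / 3) = Q x ^ ((4 : ℝ) / 3) * Q x := by
    rw [← Real.rpow_add_one hQpos.ne']
    norm_num
  rw [h73] at hQeq
  rw [Lm] at hL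
  linear_combination ξ x * hQeq - Q x * hL

end Kernel

theorem Lm_kernel_general (μ : ℝ) (Qm : E3 → ℝ) (hQm : groundState μ Qm)
    (ξ : E3 → ℝ) (hξ : H2R ξ)
    (heq : ∀ᵐ x ∂(volume : Measure E3), Lm μ Qm ξ x = 0) :
    ∃ c : ℝ, ∀ᵐ x ∂(volume : Measure E3), ξ x = c * Qm x := by
  obtain ⟨hQsmooth, hQpos, -, -, hQeq⟩ := hQm
  obtain ⟨hξ2, hξL2, -, -⟩ := hξ
  have hQ2 : ContDiff ℝ 2 Qm := hQsmooth.of_le (WithTop.coe_le_coe.mpr le_top)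
  have hae : (fun x => Qm x * lap ξ x) =ᵐ[volume] fun x => ξ x * lap Qm x := by
    filter_upwards [heq] with x hx using mul_lap_eq_of_Lm_eq_zero (hQpos x) (hQeq x) hx
  have hwronskian := (Continuous.ae_eq_iff_eq volume
    (hQ2.continuous.mul (continuous_lap hξ2)) (hξ2.continuous.mul (continuous_lap hQ2))).mp hae
  obtain ⟨c, hc⟩ := exists_eq_const_mul_of_mul_lap_eq hQ2 hQpos hξ2 hξL2 (congrFun hwronskian)
  exact ⟨c, .of_forall hc⟩

/-- The kernel of `L₋,μ` is spanned by `Q_μ`. -/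
theorem Lm_kernel (μ : ℝ) (Qm : E3 → ℝ) (hμ : 0 < μ) (hQm : groundState μ Qm)
    (ξ : E3 → ℝ) (hξ : H2R ξ)
    (heq : ∀ᵐ x ∂(volume : Measure E3), Lm μ Qm ξ x = 0) :
    ∃ c : ℝ, ∀ᵐ x ∂(volume : Measure E3), ξ x = c * Qm x :=
  Lm_kernel_general μ Qm hQm ξ hξ heq

end
end

section
/- Let μ < 0 and δ > 0. Set β = (1 + δ/‖Q‖_{L²})^{−2/3} ∈ (0,1) and for α > 0 define Q_{α,β}(x) = α^{3/2} Q(αβ x). Then: (i) ‖Q_{α,β}‖_{L²} = ‖Q‖_{L²} + δ; (ii) E_μ(Q_{α,β}) = α² β^{−3} ( (β² − 1)(3/10) ∫ Q^{10/3} − (μ/4) β^{−1} ∫∫ Q(x)² Q(y)² / |x−y|² dx dy ); (iii) there exists μ₀ > 0, depending only on δ and Q, such that if −μ₀ < μ < 0 then E_μ(Q_{α,β}) < 0 for every α > 0. -/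
open MeasureTheory

noncomputable section

/-!
The family `Q_{α,β}` is the mass-preserving rescaling `α^{3/2} Q(α ·)` followed by the dilation
`x ↦ βx`. Under it the mass picks up the factor `β^{-3/2} = 1 + δ/‖Q‖₂`, while all three terms
of the energy scale like `α²`, with the factors `β⁻¹`, `β⁻³` and `β⁻⁴` respectively. By the
Pohozaev identity the kinetic and local terms then combine to `(β² - 1)(3/10)∫Q^{10/3} < 0`,
which the Hartree term, of size `O(|μ|)`, cannot compensate when `|μ|` is small. The exponential
decay of `Q` makes `∫ Q²` and `∫ Q^{10/3}` finite, hence genuinely positive.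
-/

lemma Real.exp_neg_le_two_div_one_add_sq {r : ℝ} (hr : 0 ≤ r) :
    Real.exp (-r) ≤ 2 / (1 + r) ^ 2 := by
  rw [Real.exp_neg, inv_le_comm₀ (Real.exp_pos r) (by positivity), inv_div]
  nlinarith [Real.quadratic_le_exp_of_nonneg hr]

lemma decayLike.exists_abs_le {f : E3 → ℝ} (hdec : decayLike f) (hf : Continuous f) :
    ∃ K, ∀ x, |f x| ≤ K * (1 + ‖x‖) ^ (-2 : ℝ) := by
  obtain ⟨C, hC, htail⟩ := hdec
  obtain ⟨M, hM⟩ := (isCompact_closedBall (0 : E3) 1).exists_bound_of_continuousOn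
    hf.continuousOn
  refine ⟨max (2 * C) (4 * M), fun x => ?_⟩
  have hpow : (1 + ‖x‖) ^ (-2 : ℝ) = 1 / (1 + ‖x‖) ^ 2 := by
    rw [Real.rpow_neg (by positivity), Real.rpow_two, one_div]
  rw [hpow, mul_one_div, le_div_iff₀ (by positivity)]
  rcases le_or_gt ‖x‖ 1 with hx | hx
  · have hfx : |f x| ≤ M := hM x (by simpa using hx)
    have : (1 + ‖x‖) ^ 2 ≤ 4 := by nlinarith [norm_nonneg x]
    nlinarith [abs_nonneg (f x), le_max_right (2 * C) (4 * M)]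
  · have hfx : |f x| ≤ C * (2 / (1 + ‖x‖) ^ 2) :=
      calc |f x| ≤ C * Real.exp (-‖x‖) / ‖x‖ := (htail x hx.le).1
        _ ≤ C * Real.exp (-‖x‖) := div_le_self (by positivity) hx.le
        _ ≤ C * (2 / (1 + ‖x‖) ^ 2) := by
          gcongr; exact Real.exp_neg_le_two_div_one_add_sq (norm_nonneg x)
    rw [mul_div_assoc', le_div_iff₀ (by positivity)] at hfx
    nlinarith [le_max_left (2 * C) (4 * M), sq_nonneg (1 + ‖x‖)]

lemma integral_pos_of_forall_pos {α : Type*} [MeasurableSpace α] {μ : Measure α} [NeZero μ]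
    {f : α → ℝ} (hfi : Integrable f μ) (hf : ∀ x, 0 < f x) : 0 < ∫ x, f x ∂μ := by
  rw [integral_pos_iff_support_of_nonneg (fun x => (hf x).le) hfi,
    Function.support_eq_univ (fun x => (hf x).ne')]
  exact Measure.measure_univ_pos.2 (NeZero.ne μ)

section Integrability

variable {E : Type*} [NormedAddCommGroup E] [NormedSpace ℝ E] [FiniteDimensional ℝ E]
  [MeasurableSpace E] [BorelSpace E] {μ : Measure E} [μ.IsAddHaarMeasure]

lemma integrable_abs_rpow_of_abs_le_mul_one_add_norm_rpow {f : E → ℝ} (hf : Continuous f)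
    {K a p : ℝ} (hp : 0 ≤ p) (hdim : (Module.finrank ℝ E : ℝ) < a * p)
    (hbound : ∀ x, |f x| ≤ K * (1 + ‖x‖) ^ (-a)) :
    Integrable (fun x => |f x| ^ p) μ := by
  have hK : 0 ≤ K := by
    simpa using (abs_nonneg (f 0)).trans (hbound 0)
  refine ((integrable_one_add_norm hdim).const_mul (K ^ p)).mono'
    (hf.abs.rpow_const fun _ => Or.inr hp).aestronglyMeasurable (Filter.Eventually.of_forall
      fun x => ?_)
  have h1 : 0 ≤ 1 + ‖x‖ := by positivity
  rw [Real.norm_of_nonneg (by positivity)]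
  calc |f x| ^ p ≤ (K * (1 + ‖x‖) ^ (-a)) ^ p :=
        Real.rpow_le_rpow (abs_nonneg _) (hbound x) hp
    _ = K ^ p * (1 + ‖x‖) ^ (-(a * p)) := by
        rw [Real.mul_rpow hK (Real.rpow_nonneg h1 _), ← Real.rpow_mul h1, neg_mul]

end Integrability

lemma isQ.integral_rpow_pos {Q : E3 → ℝ} (hQ : isQ Q) {p : ℝ} (hp : 3 / 2 < p) :
    0 < ∫ x : E3, Q x ^ p := by
  obtain ⟨hsmooth, hpos, -, hdec, -⟩ := hQ
  obtain ⟨K, hK⟩ := hdec.exists_abs_le hsmooth.continuous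
  have hint := integrable_abs_rpow_of_abs_le_mul_one_add_norm_rpow (μ := volume)
    hsmooth.continuous (p := p) (by linarith)
    (by rw [finrank_euclideanSpace_fin]; push_cast; linarith) hK
  simp_rw [abs_of_pos (hpos _)] at hint
  exact integral_pos_of_forall_pos hint fun x => Real.rpow_pos_of_pos (hpos x) p

section Scaling

variable {f : E3 → ℝ} {a c : ℝ}

lemma integral_comp_smul_of_pos (g : E3 → ℝ) (hc : 0 < c) :
    ∫ x : E3, g (c • x) = (∫ x : E3, g x) / c ^ 3 := by
  rw [Measure.integral_comp_smul_of_nonneg volume g c (hR := hc.le), finrank_euclideanSpace_fin,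
    smul_eq_mul, inv_mul_eq_div]

lemma fderiv_const_mul_comp_smul {E : Type*} [NormedAddCommGroup E] [NormedSpace ℝ E]
    {g : E → ℝ} (hg : Differentiable ℝ g) (a c : ℝ) (x : E) :
    fderiv ℝ (fun y => a * g (c • y)) x = (a * c) • fderiv ℝ g (c • x) := by
  have hcomp : HasFDerivAt (fun y => g (c • y)) ((fderiv ℝ g (c • x)).comp (c • .id ℝ E)) x :=
    (hg (c • x)).hasFDerivAt.comp x ((hasFDerivAt_id x).const_smul c)
  rw [(hcomp.const_mul a).fderiv]
  ext v
  simp [smul_smul]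

lemma integral_sq_const_mul_comp_smul (hc : 0 < c) :
    ∫ x : E3, (a * f (c • x)) ^ 2 = a ^ 2 / c ^ 3 * ∫ x : E3, f x ^ 2 := by
  simp_rw [mul_pow]
  rw [integral_const_mul, integral_comp_smul_of_pos (fun y => f y ^ 2) hc]
  ring

lemma gradSqR_const_mul_comp_smul (hf : Differentiable ℝ f) (hc : 0 < c) :
    gradSqR (fun x => a * f (c • x)) = a ^ 2 / c * gradSqR f := by
  simp_rw [gradSqR, fderiv_const_mul_comp_smul hf, norm_smul, mul_pow, Real.norm_eq_abs, sq_abs]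
  rw [integral_const_mul, integral_comp_smul_of_pos (fun z => ‖fderiv ℝ f z‖ ^ 2) hc]
  field_simp

lemma integral_abs_rpow_const_mul_comp_smul (ha : 0 ≤ a) (hc : 0 < c) (p : ℝ) :
    ∫ x : E3, |a * f (c • x)| ^ p = a ^ p / c ^ 3 * ∫ x : E3, |f x| ^ p := by
  simp_rw [abs_mul, abs_of_nonneg ha, Real.mul_rpow ha (abs_nonneg _)]
  rw [integral_const_mul, integral_comp_smul_of_pos (fun z => |f z| ^ p) hc]
  ring

lemma hartreeR_const_mul_comp_smul (hc : 0 < c) :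
    hartreeR (fun x => a * f (c • x)) = a ^ 4 / c ^ 4 * hartreeR f := by
  have hintegrand : ∀ x y : E3, (a * f (c • x)) ^ 2 * (a * f (c • y)) ^ 2 / ‖x - y‖ ^ 2 =
      a ^ 4 * c ^ 2 * (f (c • x) ^ 2 * f (c • y) ^ 2 / ‖c • x - c • y‖ ^ 2) := fun x y => by
    rw [← smul_sub, norm_smul, Real.norm_of_nonneg hc.le]
    rcases eq_or_ne x y with rfl | hxy
    · simp
    · have : ‖x - y‖ ≠ 0 := norm_ne_zero_iff.2 (sub_ne_zero.2 hxy)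
      field_simp
  have hinner : ∀ x : E3, ∫ y : E3, f (c • x) ^ 2 * f (c • y) ^ 2 / ‖c • x - c • y‖ ^ 2 =
      (∫ y : E3, f (c • x) ^ 2 * f y ^ 2 / ‖c • x - y‖ ^ 2) / c ^ 3 := fun x =>
    integral_comp_smul_of_pos (fun y => f (c • x) ^ 2 * f y ^ 2 / ‖c • x - y‖ ^ 2) hc
  simp_rw [hartreeR, hintegrand, integral_const_mul, hinner, integral_div]
  rw [integral_comp_smul_of_pos (fun z => ∫ y : E3, f z ^ 2 * f y ^ 2 / ‖z - y‖ ^ 2) hc]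
  field_simp

lemma hartreeR_nonneg (u : E3 → ℝ) : 0 ≤ hartreeR u :=
  integral_nonneg fun _ => integral_nonneg fun _ => by positivity

end Scaling

section MassCriticalRescaling

variable {f : E3 → ℝ} {α β : ℝ}

lemma sqrt_rpow_neg_two_thirds_pow_three {b : ℝ} (hb : 0 ≤ b) :
    Real.sqrt ((b ^ (-2 / 3 : ℝ)) ^ 3) = b⁻¹ := by
  rw [← Real.rpow_mul_natCast hb, ← Real.sqrt_sq (inv_nonneg.2 hb), ← Real.rpow_neg_one,
    ← Real.rpow_mul_natCast hb]
  norm_num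

lemma rpow_three_halves_pow_two (hα : 0 ≤ α) : (α ^ (3 / 2 : ℝ)) ^ 2 = α ^ 3 := by
  rw [← Real.rpow_mul_natCast hα]
  norm_num

lemma L2normR_rescale (hα : 0 < α) (hβ : 0 < β) :
    L2normR (fun x => α ^ (3 / 2 : ℝ) * f ((α * β) • x)) = L2normR f / Real.sqrt (β ^ 3) := by
  rw [L2normR, integral_sq_const_mul_comp_smul (mul_pos hα hβ), rpow_three_halves_pow_two hα.le,
    mul_pow, ← mul_div_right_comm, mul_div_mul_left _ _ (by positivity),
    Real.sqrt_div' _ (by positivity), L2normR]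

lemma energyR_rescale (μ : ℝ) (hf : Differentiable ℝ f) (hα : 0 < α) (hβ : 0 < β) :
    energyR μ (fun x => α ^ (3 / 2 : ℝ) * f ((α * β) • x)) =
      α ^ 2 * ((1 / 2) * gradSqR f / β - (3 / 10) * (∫ x : E3, |f x| ^ (10 / 3 : ℝ)) / β ^ 3
        - (μ / 4) * hartreeR f / β ^ 4) := by
  have hαβ : 0 < α * β := mul_pos hα hβ
  have hpow4 : (α ^ (3 / 2 : ℝ)) ^ 4 = α ^ 6 := by
    rw [show 4 = 2 * 2 by rfl, pow_mul, rpow_three_halves_pow_two hα.le, ← pow_mul]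
  have hpow10 : (α ^ (3 / 2 : ℝ)) ^ (10 / 3 : ℝ) = α ^ 5 := by
    rw [← Real.rpow_mul hα.le, ← Real.rpow_natCast]
    norm_num
  rw [energyR, gradSqR_const_mul_comp_smul hf hαβ,
    integral_abs_rpow_const_mul_comp_smul (by positivity) hαβ, hartreeR_const_mul_comp_smul hαβ,
    rpow_three_halves_pow_two hα.le, hpow4, hpow10]
  field_simp

end MassCriticalRescaling

lemma exists_pos_forall_lt_add_mul_pos {A B : ℝ} (hA : 0 < A) (hB : 0 ≤ B) :
    ∃ μ₀ > 0, ∀ μ, -μ₀ < μ → 0 < A + μ * B := by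
  refine ⟨A / (B + 1), by positivity, fun μ hμ => ?_⟩
  have hsmall : A / (B + 1) * B < A := by
    rw [div_mul_eq_mul_div, div_lt_iff₀ (by positivity)]
    nlinarith
  nlinarith

/-- Rescaled profiles `Q_{α,β}(x) = α^{3/2}Q(αβx)` with `β = (1 + δ/‖Q‖_{L²})^{-2/3}`:
mass `‖Q‖_{L²} + δ`, explicit energy, and negative energy for `μ < 0` close to `0`. -/
theorem rescaled_negative_energy (δ : ℝ) (hδ : 0 < δ) (Q : E3 → ℝ) (hQ : isQ Q)
    (hPoh : (1 / 2) * gradSqR Q = (3 / 10) * ∫ x : E3, Q x ^ ((10 : ℝ) / 3))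
    (β : ℝ) (hβ : β = (1 + δ / L2normR Q) ^ (-(2 : ℝ) / 3)) :
    (0 < β ∧ β < 1) ∧
    (∀ α : ℝ, 0 < α →
      L2normR (fun x : E3 => α ^ ((3 : ℝ) / 2) * Q ((α * β) • x)) = L2normR Q + δ) ∧
    (∀ μ : ℝ, μ < 0 → ∀ α : ℝ, 0 < α →
      energyR μ (fun x : E3 => α ^ ((3 : ℝ) / 2) * Q ((α * β) • x)) =
        α ^ 2 * β ^ (-(3 : ℝ)) *
          ((β ^ 2 - 1) * ((3 / 10) * ∫ x : E3, Q x ^ ((10 : ℝ) / 3))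
            - (μ / 4) * β ^ (-(1 : ℝ)) * hartreeR Q)) ∧
    (∃ μ₀ > 0, ∀ μ : ℝ, -μ₀ < μ → μ < 0 → ∀ α : ℝ, 0 < α →
      energyR μ (fun x : E3 => α ^ ((3 : ℝ) / 2) * Q ((α * β) • x)) < 0) := by
  have hmass : 0 < L2normR Q :=
    Real.sqrt_pos.2 (by simpa using hQ.integral_rpow_pos (p := 2) (by norm_num))
  have hP : 0 < ∫ x : E3, Q x ^ (10 / 3 : ℝ) := hQ.integral_rpow_pos (by norm_num)
  obtain ⟨hsmooth, hpos, -⟩ := hQ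
  set b := 1 + δ / L2normR Q
  have hb : 1 < b := lt_add_of_pos_right 1 (div_pos hδ hmass)
  have hβpos : 0 < β := hβ ▸ Real.rpow_pos_of_pos (by linarith) _
  have hβ1 : β < 1 := hβ ▸ Real.rpow_lt_one_of_one_lt_of_neg hb (by norm_num)
  have henergy : ∀ μ α : ℝ, 0 < α →
      energyR μ (fun x : E3 => α ^ ((3 : ℝ) / 2) * Q ((α * β) • x)) =
        α ^ 2 * β ^ (-(3 : ℝ)) * ((β ^ 2 - 1) * ((3 / 10) * ∫ x : E3, Q x ^ ((10 : ℝ) / 3))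
          - (μ / 4) * β ^ (-(1 : ℝ)) * hartreeR Q) := fun μ α hα => by
    simp_rw [energyR_rescale μ (hsmooth.differentiable (by simp)) hα hβpos, hPoh,
      abs_of_pos (hpos _), Real.rpow_neg hβpos.le, Real.rpow_one, Real.rpow_ofNat]
    field_simp
  refine ⟨⟨hβpos, hβ1⟩, fun α hα => ?_, fun μ _ => henergy μ, ?_⟩
  · rw [L2normR_rescale hα hβpos, hβ, sqrt_rpow_neg_two_thirds_pow_three (by linarith),
      div_inv_eq_mul, mul_add, mul_one, mul_div_cancel₀ _ hmass.ne']
  · obtain ⟨μ₀, hμ₀, hsign⟩ := exists_pos_forall_lt_add_mul_pos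
      (mul_pos (by nlinarith : 0 < 1 - β ^ 2)
        (by positivity : 0 < (3 / 10) * ∫ x : E3, Q x ^ (10 / 3 : ℝ)))
      (by have := hartreeR_nonneg Q; positivity : 0 ≤ β ^ (-(1 : ℝ)) * hartreeR Q / 4)
    refine ⟨μ₀, hμ₀, fun μ hμ _ α hα => ?_⟩
    rw [henergy μ α hα]
    have := hsign μ hμ
    exact mul_neg_of_pos_of_neg (by positivity) (by linarith)

end
end
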